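/- Let X = {x_1,...,x_n} ⊂ ℝ², α > 1, and for s' ∈ ℝ² define x_i(s') = s' + ‖s' - x_i‖^{α-2}(x_i - s') and X(s') = {x_i(s')}. Then a point s' minimises P_α(s, X) = Σ_i ‖s-x_i‖^α + max_i ‖s-x_i‖^α (over s) if and only if s' minimises P_2(s, X(s')) = Σ_i ‖s - x_i(s')‖² + max_i ‖s - x_i(s')‖² (over s). -/

import Mathlib

/-!
Both objectives are convex, so a point minimises either of them iff every one-sided directional
derivative there is nonnegative. The one-sided derivative of `s ↦ ∑ᵢ fᵢ s + maxᵢ fᵢ s` in a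
direction is the sum of the derivatives of the `fᵢ` plus the largest derivative among the indices
attaining the maximum. At `s'` we have `s' - xᵢ(s') = ‖s' - xᵢ‖^(α-2) • (s' - xᵢ)`, so the gradient
of `‖· - xᵢ(s')‖²` is `2/α` times that of `‖· - xᵢ‖^α`, and `‖s' - xᵢ(s')‖ = ‖s' - xᵢ‖^(α-1)`
singles out the same farthest points. Hence the two directional derivatives differ by the positive
factor `2/α`.
-/

open Finset Filter Topology Set RealInnerProductSpace

lemma univ_sup'_eventuallyEq_sup'_of_continuousWithinAt {ι X : Type*} [Fintype ι] [Nonempty ι]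
    [TopologicalSpace X] {F : ι → X → ℝ} {t : Set X} {x : X}
    (hF : ∀ i, ContinuousWithinAt (F i) t x) {S : Finset ι} (hS : S.Nonempty)
    (hSmax : ∀ i, i ∈ S ↔ ∀ j, F j x ≤ F i x) :
    (fun z => univ.sup' univ_nonempty (F · z)) =ᶠ[𝓝[t] x] fun z => S.sup' hS (F · z) := by
  obtain ⟨i₀, hi₀⟩ := id hS
  have hlt : ∀ i ∉ S, F i x < F i₀ x := fun i hi => by
    obtain ⟨j, hj⟩ := not_forall.1 (mt (hSmax i).2 hi)
    exact (not_le.1 hj).trans_le ((hSmax i₀).1 hi₀ j)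
  have hev : ∀ᶠ z in 𝓝[t] x, ∀ i ∉ S, F i z < F i₀ z := by
    refine eventually_all.2 fun i => ?_
    by_cases hi : i ∈ S
    · exact .of_forall fun _ h => absurd hi h
    · filter_upwards [((hF i).prodMk_nhds (hF i₀)).eventually
        (isOpen_lt_prod.mem_nhds (hlt i hi))] with z hz _ using hz
  filter_upwards [hev] with z hz
  refine le_antisymm (sup'_le _ _ fun i _ => ?_) (sup'_mono _ (subset_univ S) _)
  by_cases hi : i ∈ S
  · exact le_sup' (F · z) hi
  · exact (hz i hi).le.trans (le_sup' (F · z) hi₀)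

lemma hasDerivWithinAt_finset_sup' {ι : Type*} [Fintype ι] [Nonempty ι] {F : ι → ℝ → ℝ}
    {a : ι → ℝ} {x : ℝ} (hF : ∀ i, HasDerivWithinAt (F i) (a i) (Ioi x) x)
    {S : Finset ι} (hS : S.Nonempty) (hSmax : ∀ i, i ∈ S ↔ ∀ j, F j x ≤ F i x) :
    HasDerivWithinAt (fun r => univ.sup' univ_nonempty (F · r)) (S.sup' hS a) (Ioi x) x := by
  have hactive := univ_sup'_eventuallyEq_sup'_of_continuousWithinAt
    (fun i => continuousWithinAt_Ioi_iff_Ici.1 (hF i).continuousWithinAt) hS hSmax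
  have hmax : ∀ i ∈ S, F i x = S.sup' hS (F · x) := fun i hi =>
    le_antisymm (le_sup' (F · x) hi) (sup'_le _ _ fun j _ => (hSmax i).1 hi j)
  -- All `F i x` with `i ∈ S` agree, so for `r > x` the slope of the maximum is the maximum of
  -- the slopes.
  have hslope : ∀ r ∈ Ioi x, slope (fun r => S.sup' hS (F · r)) x r =
      S.sup' hS fun i => slope (F i) x r := fun r hr => by
    set φ : ℝ → ℝ := fun t => (r - x)⁻¹ * (t - S.sup' hS (F · x))
    have hφ : Monotone φ := fun _ _ h =>
      mul_le_mul_of_nonneg_left (by linarith) (inv_nonneg.2 (sub_pos.2 hr).le)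
    simp only [slope_def_field, div_eq_inv_mul]
    refine (apply_sup'_eq_sup'_comp hS φ fun _ _ => hφ.map_sup _ _).trans
      (sup'_congr hS rfl fun i hi => ?_)
    rw [Function.comp_apply, hmax i hi]
  refine HasDerivWithinAt.congr_of_eventuallyEq ?_
    (hactive.filter_mono (nhdsWithin_mono _ Ioi_subset_Ici_self))
    (hactive.eq_of_nhdsWithin self_mem_Ici)
  rw [hasDerivWithinAt_iff_tendsto_slope' self_notMem_Ioi]
  refine (Tendsto.finset_sup'_nhds_apply hS fun i _ =>
    (hasDerivWithinAt_iff_tendsto_slope' self_notMem_Ioi).1 (hF i)).congr' ?_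
  filter_upwards [self_mem_nhdsWithin] with r hr using (hslope r hr).symm

section Convex

variable {E ι : Type*} [AddCommGroup E] [Module ℝ E]

lemma ConvexOn.finset_sum {s : Set E} (hs : Convex ℝ s) {t : Finset ι} {f : ι → E → ℝ}
    (hf : ∀ i ∈ t, ConvexOn ℝ s (f i)) : ConvexOn ℝ s fun z => ∑ i ∈ t, f i z := by
  simp_rw [← Finset.sum_apply]
  exact Finset.sum_induction f _ (fun _ _ h₁ h₂ => h₁.add h₂) (convexOn_const 0 hs) hf

lemma ConvexOn.finset_sup' {s : Set E} {t : Finset ι} (ht : t.Nonempty) {f : ι → E → ℝ}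
    (hf : ∀ i ∈ t, ConvexOn ℝ s (f i)) : ConvexOn ℝ s fun z => t.sup' ht (f · z) := by
  simp_rw [← Finset.sup'_apply]
  exact sup'_induction ht f (fun _ h₁ _ h₂ => h₁.sup h₂) hf

lemma ConvexOn.forall_le_iff_rightDeriv_nonneg {f : E → ℝ} (hf : ConvexOn ℝ univ f) {s : E}
    {f' : E → ℝ} (hf' : ∀ d, HasDerivWithinAt (fun r : ℝ => f (s + r • d)) (f' d) (Ioi 0) 0) :
    (∀ t, f s ≤ f t) ↔ ∀ d, 0 ≤ f' d := by
  constructor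
  · intro hmin d
    refine ge_of_tendsto ((hasDerivWithinAt_iff_tendsto_slope' self_notMem_Ioi).1 (hf' d)) ?_
    filter_upwards [self_mem_nhdsWithin] with r (hr : 0 < r)
    rw [slope_def_field, zero_smul, add_zero]
    exact div_nonneg (sub_nonneg.2 (hmin _)) (by linarith)
  · intro hderiv t
    have hline : ConvexOn ℝ univ fun r : ℝ => f (s + r • (t - s)) := by
      simpa [Function.comp_def, AffineMap.lineMap_apply, add_comm] using
        hf.comp_affineMap (AffineMap.lineMap s t)
    have := hline.le_slope_of_hasDerivWithinAt_Ioi (mem_univ 0) (mem_univ 1) one_pos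
      (hf' (t - s))
    simpa [slope_def_field] using (hderiv (t - s)).trans this

end Convex

section Normed

variable {E : Type*} [NormedAddCommGroup E]

lemma hasDerivAt_norm_add_smul_rpow [InnerProductSpace ℝ E] {p : ℝ} (hp : 1 < p) (v d : E) :
    HasDerivAt (fun r : ℝ => ‖v + r • d‖ ^ p) (p * ‖v‖ ^ (p - 2) * ⟪v, d⟫) 0 := by
  have hline : HasDerivAt (fun r : ℝ => v + r • d) d 0 := by
    simpa using ((hasDerivAt_id (0 : ℝ)).smul_const d).const_add v
  simpa [real_inner_smul_left, mul_assoc, Function.comp_def] using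
    (hasFDerivAt_norm_rpow (v + (0 : ℝ) • d) hp).comp_hasDerivAt 0 hline

variable [NormedSpace ℝ E]

lemma convexOn_norm_sub_rpow {p : ℝ} (hp : 1 ≤ p) (c : E) :
    ConvexOn ℝ univ fun s : E => ‖s - c‖ ^ p := by
  have hnorm : ConvexOn ℝ univ fun s : E => ‖s - c‖ := by
    simpa [Function.comp_def] using
      convexOn_univ_norm.comp_affineMap (AffineMap.id ℝ E - AffineMap.const ℝ E c)
  refine ⟨convex_univ, fun a _ b _ u v hu hv huv => ?_⟩
  calc ‖u • a + v • b - c‖ ^ p ≤ (u • ‖a - c‖ + v • ‖b - c‖) ^ p :=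
        Real.rpow_le_rpow (norm_nonneg _) (hnorm.2 (mem_univ a) (mem_univ b) hu hv huv)
          (by linarith)
    _ ≤ u • ‖a - c‖ ^ p + v • ‖b - c‖ ^ p :=
        (convexOn_rpow hp).2 (norm_nonneg _) (norm_nonneg _) hu hv huv

noncomputable def minPowerTransform (α : ℝ) (x s : E) : E :=
  s + ‖s - x‖ ^ (α - 2) • (x - s)

lemma sub_minPowerTransform (α : ℝ) (x s : E) :
    s - minPowerTransform α x s = ‖s - x‖ ^ (α - 2) • (s - x) := by
  rw [minPowerTransform, sub_add_cancel_left, ← smul_neg, neg_sub]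

lemma norm_sub_minPowerTransform {α : ℝ} (hα : 1 < α) (x s : E) :
    ‖s - minPowerTransform α x s‖ = ‖s - x‖ ^ (α - 1) := by
  rw [sub_minPowerTransform, norm_smul, Real.norm_of_nonneg (by positivity)]
  rcases (norm_nonneg (s - x)).eq_or_lt with h | h
  · rw [← h, mul_zero, Real.zero_rpow (by linarith)]
  · rw [← Real.rpow_add_one h.ne']
    ring_nf

end Normed

section MinPower

variable {ι E : Type*} [Fintype ι] [NormedAddCommGroup E]

noncomputable def farthestIndices (x : ι → E) (s : E) : Finset ι :=
  {i | ∀ j, ‖s - x j‖ ≤ ‖s - x i‖}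

lemma mem_farthestIndices {x : ι → E} {s : E} {i : ι} :
    i ∈ farthestIndices x s ↔ ∀ j, ‖s - x j‖ ≤ ‖s - x i‖ := by
  simp [farthestIndices]

lemma farthestIndices_minPowerTransform [NormedSpace ℝ E] {α : ℝ} (hα : 1 < α) (x : ι → E)
    (s : E) : farthestIndices (fun i => minPowerTransform α (x i) s) s = farthestIndices x s := by
  ext i
  simp only [mem_farthestIndices, norm_sub_minPowerTransform hα]
  exact forall_congr' fun j =>
    Real.rpow_le_rpow_iff (norm_nonneg _) (norm_nonneg _) (by linarith)

variable [Nonempty ι]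

lemma farthestIndices_nonempty (x : ι → E) (s : E) : (farthestIndices x s).Nonempty := by
  obtain ⟨i, -, hi⟩ := exists_max_image univ (fun i => ‖s - x i‖) univ_nonempty
  exact ⟨i, mem_farthestIndices.2 fun j => hi j (mem_univ j)⟩

noncomputable def minPower (p : ℝ) (x : ι → E) (s : E) : ℝ :=
  ∑ i, ‖s - x i‖ ^ p + univ.sup' univ_nonempty fun i => ‖s - x i‖ ^ p

variable [InnerProductSpace ℝ E]

noncomputable def minPowerDirDeriv (p : ℝ) (x : ι → E) (s d : E) : ℝ :=
  ∑ i, p * ‖s - x i‖ ^ (p - 2) * ⟪s - x i, d⟫ +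
    (farthestIndices x s).sup' (farthestIndices_nonempty x s)
      fun i => p * ‖s - x i‖ ^ (p - 2) * ⟪s - x i, d⟫

lemma convexOn_minPower {p : ℝ} (hp : 1 ≤ p) (x : ι → E) : ConvexOn ℝ univ (minPower p x) :=
  (ConvexOn.finset_sum convex_univ fun i _ => convexOn_norm_sub_rpow hp (x i)).add
    (ConvexOn.finset_sup' univ_nonempty fun i _ => convexOn_norm_sub_rpow hp (x i))

lemma hasDerivWithinAt_minPower_add_smul {p : ℝ} (hp : 1 < p) (x : ι → E) (s d : E) :
    HasDerivWithinAt (fun r : ℝ => minPower p x (s + r • d)) (minPowerDirDeriv p x s d)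
      (Ioi 0) 0 := by
  have hline : ∀ r : ℝ, ∀ i, s + r • d - x i = (s - x i) + r • d := fun r i => by abel
  have hF : ∀ i, HasDerivAt (fun r : ℝ => ‖s + r • d - x i‖ ^ p)
      (p * ‖s - x i‖ ^ (p - 2) * ⟪s - x i, d⟫) 0 := fun i => by
    simpa only [hline] using hasDerivAt_norm_add_smul_rpow hp (s - x i) d
  refine (HasDerivAt.fun_sum fun i _ => hF i).hasDerivWithinAt.add
    (hasDerivWithinAt_finset_sup' (fun i => (hF i).hasDerivWithinAt) _ fun i => ?_)
  simp only [zero_smul, add_zero, mem_farthestIndices]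
  exact forall_congr' fun j =>
    (Real.rpow_le_rpow_iff (norm_nonneg _) (norm_nonneg _) (by linarith)).symm

lemma minPowerDirDeriv_two_minPowerTransform {α : ℝ} (hα : 1 < α) (x : ι → E) (s d : E) :
    minPowerDirDeriv 2 (fun i => minPowerTransform α (x i) s) s d =
      (2 / α) * minPowerDirDeriv α x s d := by
  have hterm : ∀ i, 2 * ‖s - minPowerTransform α (x i) s‖ ^ ((2 : ℝ) - 2) *
      ⟪s - minPowerTransform α (x i) s, d⟫ =
        (2 / α) * (α * ‖s - x i‖ ^ (α - 2) * ⟪s - x i, d⟫) := fun i => by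
    rw [sub_self, Real.rpow_zero, sub_minPowerTransform, real_inner_smul_left]
    field_simp
  simp only [minPowerDirDeriv, hterm, farthestIndices_minPowerTransform hα, ← mul_sum, mul_add,
    mul₀_sup' (by positivity : (0 : ℝ) ≤ 2 / α)]

end MinPower

/-- `s'` minimises the α-min-power objective on `X` iff `s'` minimises the quadratic
min-power objective on the transformed set `X(s')`, where
`x_i(s') = s' + ‖s' - x_i‖^{α-2}(x_i - s')`. -/
theorem alpha_minPower_iff_quadratic_on_transformed
    {n : ℕ} [NeZero n] (x : Fin n → EuclideanSpace ℝ (Fin 2)) (α : ℝ) (hα : 1 < α)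
    (s' : EuclideanSpace ℝ (Fin 2))
    (y : Fin n → EuclideanSpace ℝ (Fin 2))
    (hy : ∀ i, y i = s' + ‖s' - x i‖ ^ (α - 2) • (x i - s'))
    (Pα P₂ : EuclideanSpace ℝ (Fin 2) → ℝ)
    (hPα : ∀ s, Pα s = (∑ i, ‖s - x i‖ ^ α) +
      Finset.univ.sup' Finset.univ_nonempty (fun i => ‖s - x i‖ ^ α))
    (hP₂ : ∀ s, P₂ s = (∑ i, ‖s - y i‖ ^ 2) +
      Finset.univ.sup' Finset.univ_nonempty (fun i => ‖s - y i‖ ^ 2)) :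
    (∀ t, Pα s' ≤ Pα t) ↔ (∀ t, P₂ s' ≤ P₂ t) := by
  obtain rfl : y = fun i => minPowerTransform α (x i) s' := funext hy
  obtain rfl : Pα = minPower α x := funext hPα
  obtain rfl : P₂ = minPower 2 (fun i => minPowerTransform α (x i) s') :=
    funext fun s => by simp only [hP₂, minPower, Real.rpow_two]
  rw [(convexOn_minPower hα.le x).forall_le_iff_rightDeriv_nonneg
      (hasDerivWithinAt_minPower_add_smul hα x s'),
    (convexOn_minPower one_le_two _).forall_le_iff_rightDeriv_nonneg
      (hasDerivWithinAt_minPower_add_smul one_lt_two _ s')]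
  simp only [minPowerDirDeriv_two_minPowerTransform hα]
  exact forall_congr' fun d => (mul_nonneg_iff_of_pos_left (by positivity)).symm
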